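/- arXiv:1501.00168 — 5 statements merged into one kernel-verified Lean document; each statement's English description precedes it below -/
import Mathlib

section
/- Let A ⊆ ℝ^n be a Lebesgue-measurable 1-avoiding set that is periodic with full-rank periodicity lattice L (i.e., x + A = A for all x ∈ L). For x ∈ ℝ^n write f(x) = δ(A ∩ (A − x)), assuming for each relevant x that this density exists (it does for periodic measurable sets). Then for every nonempty finite subgraph G = (V, E) of the unit-distance graph of ℝ^n, Σ_{x∈V} f(x) ≤ f(0) · α(G). -/
open MeasureTheory Filter Metric Set Pointwise
open scoped ENNReal
open scoped RealInnerProductSpace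

noncomputable section

/-- The cube `[p - r, p + r]^n` in `ℝ^n`. -/
def cube (n : ℕ) (p : EuclideanSpace ℝ (Fin n)) (r : ℝ) : Set (EuclideanSpace ℝ (Fin n)) :=
  {x | ∀ i, |x i - p i| ≤ r}

/-- Upper density of a (not necessarily measurable) subset of `ℝ^n`; `volume` applied to an
arbitrary set is the Lebesgue outer measure. -/
def upperDensity {n : ℕ} (A : Set (EuclideanSpace ℝ (Fin n))) : ℝ :=
  limsup (fun r : ℝ => (volume (A ∩ cube n 0 r)).toReal / (2 * r) ^ n) atTop

/-- `A` has density `d`. -/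
def HasDensity {n : ℕ} (A : Set (EuclideanSpace ℝ (Fin n))) (d : ℝ) : Prop :=
  ∀ p, Tendsto (fun r : ℝ => (volume (A ∩ cube n p r)).toReal / (2 * r) ^ n) atTop (nhds d)

/-- `A` avoids distance `1`. -/
def Avoids1 {n : ℕ} (A : Set (EuclideanSpace ℝ (Fin n))) : Prop :=
  ∀ x ∈ A, ∀ y ∈ A, dist x y ≠ 1

/-- `m_1(ℝ^n)`: the supremum of upper densities of measurable 1-avoiding sets. -/
def m1 (n : ℕ) : ℝ :=
  sSup {d | ∃ A : Set (EuclideanSpace ℝ (Fin n)),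
    MeasurableSet A ∧ Avoids1 A ∧ upperDensity A = d}

/-- Independence number of the graph with adjacency relation `adj` on vertex set `V`. -/
def indepNum {β : Type*} (adj : β → β → Prop) (V : Set β) : ℕ :=
  sSup {k | ∃ s : Finset β, ↑s ⊆ V ∧ (∀ x ∈ s, ∀ y ∈ s, x ≠ y → ¬ adj x y) ∧ s.card = k}

/-- `A` is a union of blocks: points in the same block are at distance `< 1`, points in
distinct blocks at distance `> 1`. -/
def HasBlockStructure {n : ℕ} (A : Set (EuclideanSpace ℝ (Fin n))) : Prop :=
  ∃ B : ℕ → Set (EuclideanSpace ℝ (Fin n)),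
    A = (⋃ i, B i) ∧
    (∀ i, ∀ x ∈ B i, ∀ y ∈ B i, dist x y < 1) ∧
    (∀ i j, i ≠ j → ∀ x ∈ B i, ∀ y ∈ B j, 1 < dist x y)

/-- A fixed unit vector in `ℝ^n` (junk value for `n = 0`). -/
def unitVec (n : ℕ) : EuclideanSpace ℝ (Fin n) :=
  if h : n = 0 then 0 else EuclideanSpace.single ⟨0, Nat.pos_of_ne_zero h⟩ 1

/-- `Ω_n(t)`: the average over the unit sphere `S^{n-1}` of `ξ ↦ cos (t ⟪ξ, e⟫)` for a fixed
unit vector `e`; the measure `volume.toSphere` is rotation invariant, hence proportional to the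
surface measure, so the average agrees with the surface-measure average. -/
def Omega (n : ℕ) (t : ℝ) : ℝ :=
  ⨍ ξ : sphere (0 : EuclideanSpace ℝ (Fin n)) 1,
    Real.cos (t * ⟪(ξ : EuclideanSpace ℝ (Fin n)), unitVec n⟫) ∂(volume.toSphere)

open scoped Classical in
/-- Sum of `f (x - y)` over unordered pairs `{x, y}` of distinct points of `C`
(for `f` invariant under negation this equals the sum over `(C choose 2)`). -/
def pairSum {n : ℕ} (C : Finset (EuclideanSpace ℝ (Fin n)))
    (f : EuclideanSpace ℝ (Fin n) → ℝ) : ℝ :=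
  (∑ p ∈ C.offDiag, f (p.1 - p.2)) / 2




lemma measurableSet_cube (n : ℕ) (p : EuclideanSpace ℝ (Fin n)) (r : ℝ) :
    MeasurableSet (cube n p r) := by
  have h : cube n p r = ⋂ i, (fun x : EuclideanSpace ℝ (Fin n) => |x i - p i|) ⁻¹' Set.Iic r := by
    ext x; simp [cube]
  rw [h]
  refine MeasurableSet.iInter fun i => ?_
  have hc : Continuous fun x : EuclideanSpace ℝ (Fin n) => |x i - p i| :=
    (((continuous_apply i).comp (PiLp.continuous_ofLp 2 _)).sub continuous_const).abs
  exact hc.measurable measurableSet_Iic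

lemma volume_cube_lt_top (n : ℕ) (p : EuclideanSpace ℝ (Fin n)) (r : ℝ) :
    volume (cube n p r) < ⊤ := by
  have hsub : cube n p r ⊆ Metric.closedBall p (Real.sqrt n * |r|) := by
    intro x hx
    rw [Metric.mem_closedBall, EuclideanSpace.dist_eq]
    have h1 : ∑ i, dist (x i) (p i) ^ 2 ≤ ∑ _i : Fin n, r ^ 2 := by
      refine Finset.sum_le_sum fun i _ => ?_
      have hxi := hx i
      rw [Real.dist_eq]
      nlinarith [abs_nonneg (x i - p i)]
    calc Real.sqrt (∑ i, dist (x i) (p i) ^ 2) ≤ Real.sqrt ((n : ℝ) * r ^ 2) := by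
          apply Real.sqrt_le_sqrt; simpa using h1
      _ = Real.sqrt n * |r| := by
          rw [Real.sqrt_mul (by positivity), Real.sqrt_sq_eq_abs]
  exact lt_of_le_of_lt (measure_mono hsub) measure_closedBall_lt_top


theorem autocorrelation_subgraph_constraint (n : ℕ)
    (A : Set (EuclideanSpace ℝ (Fin n))) (hA : MeasurableSet A) (hAv : Avoids1 A)
    (b : Module.Basis (Fin n) ℝ (EuclideanSpace ℝ (Fin n)))
    (hper : ∀ c : Fin n → ℤ, ((∑ i, (c i : ℝ) • b i) + ·) '' A = A)
    (f : EuclideanSpace ℝ (Fin n) → ℝ)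
    (hf : ∀ x, HasDensity (A ∩ (· + x) ⁻¹' A) (f x))
    (V : Finset (EuclideanSpace ℝ (Fin n)))
    (Adj : EuclideanSpace ℝ (Fin n) → EuclideanSpace ℝ (Fin n) → Prop)
    (hVne : V.Nonempty)
    (hsymm : ∀ x y, Adj x y → Adj y x)
    (hedge : ∀ x y, Adj x y → x ∈ V ∧ y ∈ V ∧ dist x y = 1) :
    ∑ x ∈ V, f x ≤ f 0 * (indepNum Adj ↑V : ℝ) := by
  classical
  set α : ℕ := indepNum Adj ↑V with hα
  have hcard : ∀ (s : Finset (EuclideanSpace ℝ (Fin n))), s ⊆ V →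
      (∀ x ∈ s, ∀ y ∈ s, x ≠ y → ¬ Adj x y) → s.card ≤ α := by
    intro s hs hind
    refine le_csSup ⟨V.card, ?_⟩ ⟨s, by exact_mod_cast hs, hind, rfl⟩
    rintro k ⟨t, ht, -, rfl⟩
    exact Finset.card_le_card (by exact_mod_cast ht)
  have hkey : ∀ (r : ℝ),
      ∑ x ∈ V, volume ((A ∩ (· + x) ⁻¹' A) ∩ cube n 0 r)
        ≤ (α : ℝ≥0∞) * volume ((A ∩ (· + 0) ⁻¹' A) ∩ cube n 0 r) := by
    intro r
    have hC := measurableSet_cube n 0 r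
    have hSm : ∀ x : EuclideanSpace ℝ (Fin n),
        MeasurableSet ((A ∩ (· + x) ⁻¹' A) ∩ cube n 0 r) :=
      fun x => (hA.inter (hA.preimage (measurable_add_const x))).inter hC
    have hS0 : (A ∩ (· + (0 : EuclideanSpace ℝ (Fin n))) ⁻¹' A) = A := by
      ext t; simp
    have hpt : ∀ t, ∑ x ∈ V,
        ((A ∩ (· + x) ⁻¹' A) ∩ cube n 0 r).indicator (1 : EuclideanSpace ℝ (Fin n) → ℝ≥0∞) t
          ≤ (α : ℝ≥0∞) * ((A ∩ cube n 0 r).indicator (1 : EuclideanSpace ℝ (Fin n) → ℝ≥0∞) t) := by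
      intro t
      by_cases ht : t ∈ A ∩ cube n 0 r
      · rw [Set.indicator_of_mem ht, Pi.one_apply, mul_one]
        have heq : ∑ x ∈ V,
            ((A ∩ (· + x) ⁻¹' A) ∩ cube n 0 r).indicator (1 : EuclideanSpace ℝ (Fin n) → ℝ≥0∞) t
            = ((V.filter fun x => t ∈ (A ∩ (· + x) ⁻¹' A) ∩ cube n 0 r).card : ℝ≥0∞) := by
          rw [Finset.card_filter]
          push_cast
          refine Finset.sum_congr rfl fun x _ => ?_
          by_cases h : t ∈ (A ∩ (· + x) ⁻¹' A) ∩ cube n 0 r <;>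
            simp [Set.indicator_apply, h]
        rw [heq]
        have hind : (V.filter fun x => t ∈ (A ∩ (· + x) ⁻¹' A) ∩ cube n 0 r).card ≤ α := by
          apply hcard _ (Finset.filter_subset _ _)
          intro x hx y hy hxy hadj
          have hdxy : dist x y = 1 := (hedge x y hadj).2.2
          have hxA : t + x ∈ A := (Finset.mem_filter.mp hx).2.1.2
          have hyA : t + y ∈ A := (Finset.mem_filter.mp hy).2.1.2
          have hd : dist (t + x) (t + y) = 1 := by rwa [dist_add_left]
          exact hAv _ hxA _ hyA hd
        exact_mod_cast hind
      · have hz : ∀ x ∈ V,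
            ((A ∩ (· + x) ⁻¹' A) ∩ cube n 0 r).indicator (1 : EuclideanSpace ℝ (Fin n) → ℝ≥0∞) t = 0 := by
          intro x _
          apply Set.indicator_of_notMem
          intro hmem
          exact ht ⟨hmem.1.1, hmem.2⟩
        rw [Finset.sum_congr rfl hz, Finset.sum_const, smul_zero]
        exact zero_le
    calc ∑ x ∈ V, volume ((A ∩ (· + x) ⁻¹' A) ∩ cube n 0 r)
        = ∫⁻ t, ∑ x ∈ V,
            ((A ∩ (· + x) ⁻¹' A) ∩ cube n 0 r).indicator (1 : EuclideanSpace ℝ (Fin n) → ℝ≥0∞) t := by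
          rw [lintegral_finset_sum _ fun x _ => measurable_one.indicator (hSm x)]
          exact Finset.sum_congr rfl fun x _ => (lintegral_indicator_one (hSm x)).symm
      _ ≤ ∫⁻ t, (α : ℝ≥0∞) * ((A ∩ cube n 0 r).indicator (1 : EuclideanSpace ℝ (Fin n) → ℝ≥0∞) t) :=
          lintegral_mono hpt
      _ = (α : ℝ≥0∞) * volume (A ∩ cube n 0 r) := by
          rw [lintegral_const_mul _ (measurable_one.indicator (hA.inter hC)),
            lintegral_indicator_one (hA.inter hC)]
      _ = _ := by rw [hS0]
  have hle : ∀ᶠ r in atTop, ∑ x ∈ V,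
      (volume ((A ∩ (· + x) ⁻¹' A) ∩ cube n 0 r)).toReal / (2 * r) ^ n
        ≤ (α : ℝ) * ((volume ((A ∩ (· + 0) ⁻¹' A) ∩ cube n 0 r)).toReal / (2 * r) ^ n) := by
    filter_upwards [eventually_ge_atTop (1 : ℝ)] with r hr
    have hpos : (0 : ℝ) < (2 * r) ^ n := pow_pos (by linarith) n
    have hfin : ∀ x : EuclideanSpace ℝ (Fin n),
        volume ((A ∩ (· + x) ⁻¹' A) ∩ cube n 0 r) ≠ ⊤ :=
      fun x => (lt_of_le_of_lt (measure_mono Set.inter_subset_right)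
        (volume_cube_lt_top n 0 r)).ne
    have h1 : ∑ x ∈ V, (volume ((A ∩ (· + x) ⁻¹' A) ∩ cube n 0 r)).toReal
        ≤ (α : ℝ) * (volume ((A ∩ (· + 0) ⁻¹' A) ∩ cube n 0 r)).toReal := by
      have h2 : (∑ x ∈ V, volume ((A ∩ (· + x) ⁻¹' A) ∩ cube n 0 r)).toReal
          ≤ ((α : ℝ≥0∞) * volume ((A ∩ (· + 0) ⁻¹' A) ∩ cube n 0 r)).toReal :=
        ENNReal.toReal_mono (ENNReal.mul_ne_top (ENNReal.natCast_ne_top α) (hfin 0)) (hkey r)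
      rwa [ENNReal.toReal_sum (fun x _ => hfin x), ENNReal.toReal_mul,
        ENNReal.toReal_natCast] at h2
    calc ∑ x ∈ V, (volume ((A ∩ (· + x) ⁻¹' A) ∩ cube n 0 r)).toReal / (2 * r) ^ n
        = (∑ x ∈ V, (volume ((A ∩ (· + x) ⁻¹' A) ∩ cube n 0 r)).toReal) / (2 * r) ^ n :=
          (Finset.sum_div _ _ _).symm
      _ ≤ ((α : ℝ) * (volume ((A ∩ (· + 0) ⁻¹' A) ∩ cube n 0 r)).toReal) / (2 * r) ^ n := by
          gcongr
      _ = (α : ℝ) * ((volume ((A ∩ (· + 0) ⁻¹' A) ∩ cube n 0 r)).toReal / (2 * r) ^ n) :=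
          mul_div_assoc _ _ _
  have h1 : Tendsto (fun r : ℝ => ∑ x ∈ V,
      (volume ((A ∩ (· + x) ⁻¹' A) ∩ cube n 0 r)).toReal / (2 * r) ^ n)
      atTop (nhds (∑ x ∈ V, f x)) :=
    tendsto_finset_sum _ fun x _ => hf x 0
  have h2 : Tendsto (fun r : ℝ => (α : ℝ) *
      ((volume ((A ∩ (· + 0) ⁻¹' A) ∩ cube n 0 r)).toReal / (2 * r) ^ n))
      atTop (nhds ((α : ℝ) * f 0)) :=
    ((hf 0 0).const_mul _)
  have hfinal := le_of_tendsto_of_tendsto h1 h2 hle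
  rw [mul_comm]
  exact hfinal


end
end

section
/- Let A ⊆ ℝ^n be a Lebesgue-measurable 1-avoiding set that is periodic with full-rank periodicity lattice L. For x ∈ ℝ^n write f(x) = δ(A ∩ (A − x)), assuming for each relevant x that this density exists (it does for periodic measurable sets). Then for every finite set of points C ⊆ ℝ^n, Σ_{{x,y}∈(C choose 2)} f(x − y) ≥ |C| · f(0) − 1, where (C choose 2) is the set of unordered pairs of distinct points of C. -/
open MeasureTheory Filter Metric Set Pointwise
open scoped RealInnerProductSpace

noncomputable section

/-- Bonferroni lower bound for the measure of a finite union. -/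
lemma bonferroni {α β : Type*} [MeasurableSpace α] [DecidableEq β] (μ : Measure α)
    [IsFiniteMeasure μ] (T : β → Set α) (hT : ∀ b, MeasurableSet (T b))
    (s : Finset β) :
    (∑ x ∈ s, (μ (T x)).toReal) ≤
      (μ (⋃ x ∈ s, T x)).toReal + (∑ p ∈ s.offDiag, (μ (T p.1 ∩ T p.2)).toReal) / 2 := by
  classical
  induction s using Finset.induction_on with
  | empty => simp
  | @insert a s ha ih =>
    set U : Set α := ⋃ x ∈ s, T x with hUdef
    have hU : MeasurableSet U := s.measurableSet_biUnion fun b _ => hT b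
    have key : μ (T a ∪ U) + μ (T a ∩ U) = μ (T a) + μ U :=
      measure_union_add_inter (T a) hU
    have h1 : (μ (T a)).toReal + (μ U).toReal
        = (μ (T a ∪ U)).toReal + (μ (T a ∩ U)).toReal := by
      rw [← ENNReal.toReal_add (measure_ne_top _ _) (measure_ne_top _ _),
        ← ENNReal.toReal_add (measure_ne_top _ _) (measure_ne_top _ _), key]
    have h2 : (μ (T a ∩ U)).toReal ≤ ∑ y ∈ s, (μ (T a ∩ T y)).toReal := by
      have hEq : T a ∩ U = ⋃ y ∈ s, T a ∩ T y := by
        simp [hUdef, Set.inter_iUnion]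
      rw [hEq]
      refine le_trans (ENNReal.toReal_mono ?_ (measure_biUnion_finset_le s _)) ?_
      · exact (ENNReal.sum_lt_top.2 fun y _ => (measure_lt_top μ _)).ne
      · rw [ENNReal.toReal_sum fun y _ => measure_ne_top _ _]
    have hoff : (∑ p ∈ (insert a s).offDiag, (μ (T p.1 ∩ T p.2)).toReal)
        = (∑ p ∈ s.offDiag, (μ (T p.1 ∩ T p.2)).toReal)
          + 2 * ∑ y ∈ s, (μ (T a ∩ T y)).toReal := by
      rw [Finset.offDiag_insert ha]
      have d1 : Disjoint s.offDiag ({a} ×ˢ s) := by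
        rw [Finset.disjoint_left]
        rintro ⟨x, y⟩ hp hq
        rw [Finset.mem_offDiag] at hp
        rw [Finset.mem_product, Finset.mem_singleton] at hq
        exact ha (hq.1 ▸ hp.1)
      have d2 : Disjoint (s.offDiag ∪ {a} ×ˢ s) (s ×ˢ {a}) := by
        rw [Finset.disjoint_left]
        rintro ⟨x, y⟩ hp hq
        rw [Finset.mem_product, Finset.mem_singleton] at hq
        rcases Finset.mem_union.1 hp with hp | hp
        · rw [Finset.mem_offDiag] at hp
          exact ha (hq.2 ▸ hp.2.1)
        · rw [Finset.mem_product, Finset.mem_singleton] at hp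
          exact ha (hq.2 ▸ hp.2)
      rw [Finset.sum_union d2, Finset.sum_union d1, Finset.sum_product,
        Finset.sum_product, Finset.sum_singleton]
      have : ∀ y ∈ s, (∑ _x ∈ ({a} : Finset β), (μ (T y ∩ T _x)).toReal)
          = (μ (T a ∩ T y)).toReal := by
        intro y _; rw [Finset.sum_singleton, Set.inter_comm]
      rw [Finset.sum_congr rfl this]
      ring
    rw [Finset.sum_insert ha, Finset.set_biUnion_insert, hoff]
    have := ih
    linarith


theorem autocorrelation_inclusion_exclusion (n : ℕ)
    (A : Set (EuclideanSpace ℝ (Fin n))) (hA : MeasurableSet A) (hAv : Avoids1 A)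
    (b : Module.Basis (Fin n) ℝ (EuclideanSpace ℝ (Fin n)))
    (hper : ∀ c : Fin n → ℤ, ((∑ i, (c i : ℝ) • b i) + ·) '' A = A)
    (f : EuclideanSpace ℝ (Fin n) → ℝ)
    (hf : ∀ x, HasDensity (A ∩ (· + x) ⁻¹' A) (f x))
    (C : Finset (EuclideanSpace ℝ (Fin n))) :
    (C.card : ℝ) * f 0 - 1 ≤ pairSum C f := by
  classical
  -- `T x` is the translate `A - x`.
  set T : EuclideanSpace ℝ (Fin n) → Set (EuclideanSpace ℝ (Fin n)) :=
    fun x => (· + x) ⁻¹' A with hTdef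
  have hT : ∀ x, MeasurableSet (T x) := fun x => hA.preimage (measurable_add_const x)
  have hcube : ∀ (p : EuclideanSpace ℝ (Fin n)) (r : ℝ), MeasurableSet (cube n p r) := by
    intro p r
    have : cube n p r
        = ⋂ i, (fun x : EuclideanSpace ℝ (Fin n) => x i) ⁻¹' (Icc (p i - r) (p i + r)) := by
      ext x
      simp only [cube, mem_setOf_eq, mem_iInter, mem_preimage, mem_Icc, abs_le]
      exact forall_congr' fun i => ⟨fun h => ⟨by linarith [h.1], by linarith [h.2]⟩,
        fun h => ⟨by linarith [h.1], by linarith [h.2]⟩⟩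
    rw [this]
    exact MeasurableSet.iInter fun i => measurableSet_Icc.preimage
      ((measurable_pi_apply i).comp (MeasurableEquiv.toLp 2 (Fin n → ℝ)).symm.measurable)
  have hvol : ∀ r : ℝ, 0 ≤ r →
      volume (cube n (0 : EuclideanSpace ℝ (Fin n)) r) = ENNReal.ofReal ((2*r)^n) := by
    intro r hr
    have hset : cube n (0 : EuclideanSpace ℝ (Fin n)) r
        = ((MeasurableEquiv.toLp 2 (Fin n → ℝ)).symm) ⁻¹' (Set.univ.pi fun _ : Fin n => Icc (-r) r) := by
      ext x
      simp only [cube, mem_setOf_eq, mem_preimage, Set.mem_pi, Set.mem_univ, forall_true_left,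
        mem_Icc, PiLp.zero_apply, sub_zero, abs_le]
      exact Iff.rfl
    rw [hset, (EuclideanSpace.volume_preserving_symm_measurableEquiv_toLp (Fin n)).measure_preimage
      (MeasurableSet.univ_pi (fun _ => measurableSet_Icc)).nullMeasurableSet, volume_pi_pi]
    rw [Real.volume_Icc]
    rw [Finset.prod_const, Finset.card_univ, Fintype.card_fin,
      ← ENNReal.ofReal_pow (by linarith)]
    norm_num
    ring_nf
  have hsingle : ∀ (x : EuclideanSpace ℝ (Fin n)) (r : ℝ),
      volume (T x ∩ cube n 0 r) = volume (A ∩ cube n x r) := by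
    intro x r
    have hset : T x ∩ cube n 0 r = (· + x) ⁻¹' (A ∩ cube n x r) := by
      ext z
      simp only [hTdef, Set.mem_inter_iff, Set.mem_preimage, cube, Set.mem_setOf_eq,
        PiLp.add_apply, PiLp.zero_apply, sub_zero, add_sub_cancel_right]
    rw [hset, measure_preimage_add_right]
  have hpair : ∀ (x y : EuclideanSpace ℝ (Fin n)) (r : ℝ),
      volume (T x ∩ T y ∩ cube n 0 r)
        = volume ((A ∩ (· + (x - y)) ⁻¹' A) ∩ cube n y r) := by
    intro x y r
    have key : ∀ z : EuclideanSpace ℝ (Fin n), z + y + (x - y) = z + x := fun z => by abel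
    have hset : T x ∩ T y ∩ cube n 0 r
        = (· + y) ⁻¹' ((A ∩ (· + (x - y)) ⁻¹' A) ∩ cube n y r) := by
      ext z
      simp only [hTdef, Set.mem_inter_iff, Set.mem_preimage, cube, Set.mem_setOf_eq,
        PiLp.add_apply, PiLp.zero_apply, sub_zero, add_sub_cancel_right, key]
      tauto
    rw [hset, measure_preimage_add_right]
  -- the Bonferroni-type inequality at scale `r`
  have hineq : ∀ r : ℝ, 0 < r →
      (∑ x ∈ C, (volume (A ∩ cube n x r)).toReal)
        ≤ (2*r)^n
          + (∑ p ∈ C.offDiag,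
              (volume ((A ∩ (· + (p.1 - p.2)) ⁻¹' A) ∩ cube n p.2 r)).toReal) / 2 := by
    intro r hr
    set Q := cube n (0 : EuclideanSpace ℝ (Fin n)) r with hQdef
    have hQ : MeasurableSet Q := hcube _ _
    have hQvol : volume Q = ENNReal.ofReal ((2*r)^n) := hvol r hr.le
    haveI hfin : IsFiniteMeasure (volume.restrict Q) :=
      ⟨by rw [Measure.restrict_apply_univ, hQvol]; exact ENNReal.ofReal_lt_top⟩
    have hb := bonferroni (volume.restrict Q) T hT C
    have e1 : ∀ x ∈ C, ((volume.restrict Q) (T x)).toReal = (volume (A ∩ cube n x r)).toReal := by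
      intro x _
      rw [Measure.restrict_apply (hT x), hsingle]
    have e2 : ∀ p ∈ C.offDiag, ((volume.restrict Q) (T p.1 ∩ T p.2)).toReal
        = (volume ((A ∩ (· + (p.1 - p.2)) ⁻¹' A) ∩ cube n p.2 r)).toReal := by
      intro p _
      rw [Measure.restrict_apply ((hT p.1).inter (hT p.2)), hpair]
    rw [Finset.sum_congr rfl e1, Finset.sum_congr rfl e2] at hb
    refine hb.trans ?_
    have hU : ((volume.restrict Q) (⋃ x ∈ C, T x)).toReal ≤ (2*r)^n := by
      have h1 : (volume.restrict Q) (⋃ x ∈ C, T x) ≤ volume Q := by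
        rw [Measure.restrict_apply (C.measurableSet_biUnion fun x _ => hT x)]
        exact measure_mono inter_subset_right
      have h2 := ENNReal.toReal_mono (by rw [hQvol]; exact ENNReal.ofReal_ne_top) h1
      rwa [hQvol, ENNReal.toReal_ofReal (by positivity)] at h2
    linarith
  -- limits
  have hA0 : A ∩ (· + (0 : EuclideanSpace ℝ (Fin n))) ⁻¹' A = A := by
    simp
  have hlim1 : ∀ x : EuclideanSpace ℝ (Fin n),
      Tendsto (fun r : ℝ => (volume (A ∩ cube n x r)).toReal / (2*r)^n) atTop (nhds (f 0)) := by
    intro x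
    have h := hf 0
    rw [hA0] at h
    exact h x
  have hlim2 : ∀ p : EuclideanSpace ℝ (Fin n) × EuclideanSpace ℝ (Fin n),
      Tendsto (fun r : ℝ =>
        (volume ((A ∩ (· + (p.1 - p.2)) ⁻¹' A) ∩ cube n p.2 r)).toReal / (2*r)^n)
        atTop (nhds (f (p.1 - p.2))) := fun p => hf (p.1 - p.2) p.2
  set Φ : ℝ → ℝ := fun r =>
    (∑ x ∈ C, (volume (A ∩ cube n x r)).toReal / (2*r)^n)
      - (∑ p ∈ C.offDiag,
          (volume ((A ∩ (· + (p.1 - p.2)) ⁻¹' A) ∩ cube n p.2 r)).toReal / (2*r)^n) / 2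
    with hΦdef
  have hΦlim : Tendsto Φ atTop (nhds ((C.card : ℝ) * f 0 - pairSum C f)) := by
    have t1 : Tendsto (fun r : ℝ => ∑ x ∈ C, (volume (A ∩ cube n x r)).toReal / (2*r)^n)
        atTop (nhds ((C.card : ℝ) * f 0)) := by
      have := tendsto_finset_sum C (fun x _ => hlim1 x)
      simpa [Finset.sum_const, nsmul_eq_mul] using this
    have t2 : Tendsto (fun r : ℝ => ∑ p ∈ C.offDiag,
        (volume ((A ∩ (· + (p.1 - p.2)) ⁻¹' A) ∩ cube n p.2 r)).toReal / (2*r)^n)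
        atTop (nhds (∑ p ∈ C.offDiag, f (p.1 - p.2))) :=
      tendsto_finset_sum _ (fun p _ => hlim2 p)
    have := t1.sub (t2.div_const 2)
    simpa [pairSum] using this
  have hΦle : ∀ᶠ r : ℝ in atTop, Φ r ≤ 1 := by
    filter_upwards [eventually_gt_atTop (0:ℝ)] with r hr
    have hD : (0:ℝ) < (2*r)^n := by positivity
    have h := hineq r hr
    rw [hΦdef]
    simp only
    rw [← Finset.sum_div, ← Finset.sum_div, div_div, mul_comm ((2*r)^n) 2, ← div_div,
      ← sub_div, div_le_one hD]
    linarith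
  have hfinal : (C.card : ℝ) * f 0 - pairSum C f ≤ 1 := le_of_tendsto hΦlim hΦle
  linarith

end
end

section
/- Let A ⊆ ℝ^n be a Lebesgue-measurable 1-avoiding set that is periodic with full-rank periodicity lattice L, and write f(x) = δ(A ∩ (A − x)) (these densities exist for periodic measurable sets). Then for every integer m ≥ 1 and every finite set C ⊆ ℝ^n, Σ_{{x,y}∈(C choose 2)} f(x − y) ≥ m|C| · f(0) − m(m+1)/2. -/
open MeasureTheory Filter Metric Set Pointwise
open scoped RealInnerProductSpace

noncomputable section

lemma cube_measurable {n : ℕ} (p : EuclideanSpace ℝ (Fin n)) (r : ℝ) :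
    MeasurableSet (cube n p r) := by
  have : cube n p r = ⋂ i, {x : EuclideanSpace ℝ (Fin n) | |x i - p i| ≤ r} := by
    ext x; simp [cube]
  rw [this]
  refine MeasurableSet.iInter fun i =>
    measurableSet_le (Measurable.abs (Measurable.sub_const ?_ (p i))) measurable_const
  fun_prop

lemma volume_cube {n : ℕ} (p : EuclideanSpace ℝ (Fin n)) {r : ℝ} (hr : 0 ≤ r) :
    volume (cube n p r) = ENNReal.ofReal ((2 * r) ^ n) := by
  have h := (EuclideanSpace.volume_preserving_symm_measurableEquiv_toLp (Fin n)).measure_preimage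
    (s := Set.univ.pi fun i : Fin n => Icc (p i - r) (p i + r))
    (by exact (MeasurableSet.univ_pi fun i => measurableSet_Icc).nullMeasurableSet)
  have hset : (⇑(MeasurableEquiv.toLp 2 (Fin n → ℝ)).symm) ⁻¹'
      (Set.univ.pi fun i : Fin n => Icc (p i - r) (p i + r)) = cube n p r := by
    ext x
    simp only [mem_preimage, Set.mem_univ_pi, mem_Icc, cube,
      mem_setOf_eq, abs_sub_le_iff, MeasurableEquiv.toLp_symm_apply]
    constructor
    · intro h i; have := h i; constructor <;> linarith [this.1, this.2]
    · intro h i; have := h i; constructor <;> linarith [this.1, this.2]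
  rw [hset] at h
  rw [h, volume_pi_pi]
  simp only [Real.volume_Icc]
  rw [Finset.prod_congr rfl (fun i _ => by rw [show p i + r - (p i - r) = 2*r by ring]),
    Finset.prod_const, ← ENNReal.ofReal_pow (by linarith)]
  simp [Finset.card_univ]

lemma mem_cube_add {n : ℕ} (x t : EuclideanSpace ℝ (Fin n)) (r : ℝ) :
    t ∈ cube n 0 r ↔ t + x ∈ cube n x r := by
  simp only [cube, mem_setOf_eq, PiLp.add_apply]
  constructor
  · intro h i; have := h i; simpa using by simpa using this
  · intro h i; have := h i; simp at this ⊢; simpa using this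

open scoped Classical in
lemma key_ineq {n : ℕ} (A : Set (EuclideanSpace ℝ (Fin n))) (hA : MeasurableSet A)
    (m : ℕ) (C : Finset (EuclideanSpace ℝ (Fin n))) {r : ℝ} (hr : 0 < r) :
    2*(m:ℝ) * (∑ x ∈ C, (volume (A ∩ cube n x r)).toReal) - (m:ℝ)*((m:ℝ)+1) * (2*r)^n
      ≤ ∑ p ∈ C.offDiag, (volume ((A ∩ (· + (p.2 - p.1)) ⁻¹' A) ∩ cube n p.1 r)).toReal := by
  classical
  set Q : Set (EuclideanSpace ℝ (Fin n)) := cube n 0 r with hQ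
  have hQm : MeasurableSet Q := cube_measurable _ _
  have hQvol : volume Q = ENNReal.ofReal ((2*r)^n) := volume_cube _ hr.le
  have hQfin : volume Q < ⊤ := by rw [hQvol]; exact ENNReal.ofReal_lt_top
  set B : EuclideanSpace ℝ (Fin n) → Set (EuclideanSpace ℝ (Fin n)) :=
    fun x => (· + x) ⁻¹' A ∩ Q with hB
  have hBm : ∀ x, MeasurableSet (B x) := fun x =>
    (hA.preimage (measurable_add_const x)).inter hQm
  have hBfin : ∀ x, volume (B x) < ⊤ := fun x =>
    lt_of_le_of_lt (measure_mono inter_subset_right) hQfin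
  have hx : ∀ x, volume (B x) = volume (A ∩ cube n x r) := by
    intro x
    have : B x = (· + x) ⁻¹' (A ∩ cube n x r) := by
      ext t
      simp only [hB, mem_inter_iff, mem_preimage]
      rw [mem_cube_add x t r]
    rw [this, measure_preimage_add_right]
  have hxy : ∀ x y, volume (B x ∩ B y)
      = volume ((A ∩ (· + (y - x)) ⁻¹' A) ∩ cube n x r) := by
    intro x y
    have e1 : ∀ t : EuclideanSpace ℝ (Fin n), t + x + (y - x) = t + y := fun t => by abel
    have : B x ∩ B y = (· + x) ⁻¹' ((A ∩ (· + (y - x)) ⁻¹' A) ∩ cube n x r) := by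
      ext t
      simp only [hB, mem_inter_iff, mem_preimage, e1]
      rw [← mem_cube_add x t r]
      tauto
    rw [this, measure_preimage_add_right]
  set φ : EuclideanSpace ℝ (Fin n) → EuclideanSpace ℝ (Fin n) → ℝ :=
    fun x => (B x).indicator 1 with hφ
  have hφint : ∀ x, Integrable (φ x) := by
    intro x
    rw [hφ, integrable_indicator_iff (hBm x)]
    exact integrableOn_const (hBfin x).ne
  set g : EuclideanSpace ℝ (Fin n) → ℝ := fun t => ∑ x ∈ C, φ x t with hg
  have hgint : Integrable g := integrable_finset_sum _ fun x _ => hφint x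
  have hprod : ∀ x y, (fun t => φ x t * φ y t) = (B x ∩ B y).indicator 1 := by
    intro x y; rw [Set.inter_indicator_one]; rfl
  have hprodint : ∀ x y, Integrable (fun t => φ x t * φ y t) := by
    intro x y
    rw [hprod, integrable_indicator_iff ((hBm x).inter (hBm y))]
    exact integrableOn_const (lt_of_le_of_lt
      (measure_mono (inter_subset_left.trans inter_subset_right)) hQfin).ne
  have hg2 : (fun t => g t ^ 2) = fun t => ∑ p ∈ C ×ˢ C, φ p.1 t * φ p.2 t := by
    funext t
    rw [sq, hg, Finset.sum_mul_sum, ← Finset.sum_product']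
  have hg2int : Integrable (fun t => g t ^ 2) := by
    rw [hg2]; exact integrable_finset_sum _ fun p _ => hprodint p.1 p.2
  have hindint : Integrable (Q.indicator (1 : EuclideanSpace ℝ (Fin n) → ℝ)) := by
    rw [integrable_indicator_iff hQm]
    exact integrableOn_const hQfin.ne
  -- pointwise inequality
  have hpt : ∀ t, 0 ≤ g t ^ 2 - (2*(m:ℝ)+1) * g t + (m:ℝ)*((m:ℝ)+1) * Q.indicator 1 t := by
    intro t
    by_cases ht : t ∈ Q
    · have hgt : g t = ((C.filter fun x => t ∈ B x).card : ℝ) := by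
        simp only [hg, hφ, Set.indicator_apply, Pi.one_apply, Finset.sum_boole]
        convert Finset.sum_boole (s := C) (p := fun x => t ∈ B x) (R := ℝ)
      set k := (C.filter fun x => t ∈ B x).card
      have hind : Q.indicator (1 : EuclideanSpace ℝ (Fin n) → ℝ) t = 1 :=
        Set.indicator_of_mem ht 1
      rw [hgt, hind]
      rcases (by omega : k ≤ m ∨ m + 1 ≤ k) with h | h
      · have h' : (k:ℝ) ≤ m := by exact_mod_cast h
        have key : 0 ≤ ((m:ℝ) - k) * (((m:ℝ)+1) - k) :=
          mul_nonneg (by linarith) (by linarith)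
        nlinarith [key]
      · have h' : (m:ℝ) + 1 ≤ k := by exact_mod_cast h
        have key : 0 ≤ ((k:ℝ) - m) * ((k:ℝ) - ((m:ℝ)+1)) :=
          mul_nonneg (by linarith) (by linarith)
        nlinarith [key]
    · have hgt : g t = 0 := by
        simp only [hg]
        exact Finset.sum_eq_zero fun x _ =>
          Set.indicator_of_notMem (fun hmem => ht hmem.2) 1
      have hind : Q.indicator (1 : EuclideanSpace ℝ (Fin n) → ℝ) t = 0 :=
        Set.indicator_of_notMem ht 1
      rw [hgt, hind]; norm_num
  -- integrate
  have h0 : 0 ≤ ∫ t, (g t ^ 2 - (2*(m:ℝ)+1) * g t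
      + (m:ℝ)*((m:ℝ)+1) * Q.indicator 1 t) := integral_nonneg hpt
  have i1 : Integrable (fun t => g t ^ 2 - (2*(m:ℝ)+1) * g t) :=
    hg2int.sub (hgint.const_mul _)
  have i2 : Integrable (fun t =>
      (m:ℝ)*((m:ℝ)+1) * Q.indicator (1 : EuclideanSpace ℝ (Fin n) → ℝ) t) :=
    hindint.const_mul _
  have i3 : Integrable (fun t => (2*(m:ℝ)+1) * g t) := hgint.const_mul _
  rw [integral_add i1 i2, integral_sub hg2int i3, integral_const_mul, integral_const_mul] at h0
  have Ig : ∫ t, g t = ∑ x ∈ C, (volume (B x)).toReal := by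
    rw [hg, integral_finset_sum _ fun x _ => hφint x]
    exact Finset.sum_congr rfl fun x _ => integral_indicator_one (hBm x)
  have Ig2 : ∫ t, g t ^ 2 = ∑ p ∈ C ×ˢ C, (volume (B p.1 ∩ B p.2)).toReal := by
    rw [hg2, integral_finset_sum _ fun p _ => hprodint p.1 p.2]
    refine Finset.sum_congr rfl fun p _ => ?_
    rw [hprod p.1 p.2]
    exact integral_indicator_one ((hBm p.1).inter (hBm p.2))
  have IQ : ∫ t, Q.indicator (1 : EuclideanSpace ℝ (Fin n) → ℝ) t = (2*r)^n := by
    rw [integral_indicator_one hQm, measureReal_def, hQvol, ENNReal.toReal_ofReal (by positivity)]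
  rw [Ig, Ig2, IQ] at h0
  have hsplit : ∑ p ∈ C ×ˢ C, (volume (B p.1 ∩ B p.2)).toReal
      = (∑ x ∈ C, (volume (B x)).toReal)
        + ∑ p ∈ C.offDiag, (volume (B p.1 ∩ B p.2)).toReal := by
    rw [← Finset.diag_union_offDiag C,
      Finset.sum_union (Finset.disjoint_diag_offDiag C), Finset.sum_diag]
    congr 1
    exact Finset.sum_congr rfl fun x _ => by rw [Set.inter_self]
  rw [hsplit] at h0
  have hfin : ∑ p ∈ C.offDiag, (volume (B p.1 ∩ B p.2)).toReal
      = ∑ p ∈ C.offDiag, (volume ((A ∩ (· + (p.2 - p.1)) ⁻¹' A) ∩ cube n p.1 r)).toReal :=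
    Finset.sum_congr rfl fun p _ => by rw [hxy p.1 p.2]
  have hfin1 : ∑ x ∈ C, (volume (B x)).toReal = ∑ x ∈ C, (volume (A ∩ cube n x r)).toReal :=
    Finset.sum_congr rfl fun x _ => by rw [hx x]
  rw [hfin, hfin1] at h0
  linarith [h0]


theorem autocorrelation_chung_inequality (n : ℕ)
    (A : Set (EuclideanSpace ℝ (Fin n))) (hA : MeasurableSet A) (hAv : Avoids1 A)
    (b : Module.Basis (Fin n) ℝ (EuclideanSpace ℝ (Fin n)))
    (hper : ∀ c : Fin n → ℤ, ((∑ i, (c i : ℝ) • b i) + ·) '' A = A)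
    (f : EuclideanSpace ℝ (Fin n) → ℝ)
    (hf : ∀ x, HasDensity (A ∩ (· + x) ⁻¹' A) (f x))
    (m : ℕ) (hm : 1 ≤ m) (C : Finset (EuclideanSpace ℝ (Fin n))) :
    (m : ℝ) * (C.card : ℝ) * f 0 - (m : ℝ) * ((m : ℝ) + 1) / 2 ≤ pairSum C f := by
  classical
  have hA0 : A ∩ (· + (0 : EuclideanSpace ℝ (Fin n))) ⁻¹' A = A := by
    ext t; simp
  have t1 : Tendsto (fun r : ℝ => ∑ x ∈ C,
      (volume (A ∩ cube n x r)).toReal / (2*r)^n) atTop (nhds (∑ _x ∈ C, f 0)) := by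
    refine tendsto_finset_sum _ fun x _ => ?_
    have := hf 0 x
    rwa [hA0] at this
  have hsum0 : (∑ _x ∈ C, f 0) = (C.card : ℝ) * f 0 := by
    rw [Finset.sum_const, nsmul_eq_mul]
  rw [hsum0] at t1
  have hL : Tendsto (fun r : ℝ => 2*(m:ℝ) * (∑ x ∈ C,
      (volume (A ∩ cube n x r)).toReal / (2*r)^n) - (m:ℝ)*((m:ℝ)+1)) atTop
      (nhds (2*(m:ℝ) * ((C.card : ℝ) * f 0) - (m:ℝ)*((m:ℝ)+1))) :=
    (t1.const_mul _).sub_const _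
  have hR : Tendsto (fun r : ℝ => ∑ p ∈ C.offDiag,
      (volume ((A ∩ (· + (p.2 - p.1)) ⁻¹' A) ∩ cube n p.1 r)).toReal / (2*r)^n) atTop
      (nhds (∑ p ∈ C.offDiag, f (p.2 - p.1))) :=
    tendsto_finset_sum _ fun p _ => hf (p.2 - p.1) p.1
  have hLE : ∀ᶠ r : ℝ in atTop,
      2*(m:ℝ) * (∑ x ∈ C, (volume (A ∩ cube n x r)).toReal / (2*r)^n) - (m:ℝ)*((m:ℝ)+1)
      ≤ ∑ p ∈ C.offDiag,
        (volume ((A ∩ (· + (p.2 - p.1)) ⁻¹' A) ∩ cube n p.1 r)).toReal / (2*r)^n := by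
    filter_upwards [eventually_gt_atTop (0:ℝ)] with r hr
    have key := key_ineq A hA m C hr
    have hpow : (0:ℝ) < (2*r)^n := by positivity
    rw [← Finset.sum_div, ← Finset.sum_div]
    have heq : 2*(m:ℝ) * ((∑ x ∈ C, (volume (A ∩ cube n x r)).toReal) / (2*r)^n)
        - (m:ℝ)*((m:ℝ)+1)
        = (2*(m:ℝ) * (∑ x ∈ C, (volume (A ∩ cube n x r)).toReal)
            - (m:ℝ)*((m:ℝ)+1) * (2*r)^n) / (2*r)^n := by
      field_simp
    rw [heq]
    gcongr
  have final : 2*(m:ℝ) * ((C.card : ℝ) * f 0) - (m:ℝ)*((m:ℝ)+1)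
      ≤ ∑ p ∈ C.offDiag, f (p.2 - p.1) :=
    le_of_tendsto_of_tendsto hL hR hLE
  have hswap : ∑ p ∈ C.offDiag, f (p.2 - p.1) = ∑ p ∈ C.offDiag, f (p.1 - p.2) := by
    refine Finset.sum_equiv (Equiv.prodComm _ _) (fun p => ?_) (fun p _ => rfl)
    simp only [Finset.mem_offDiag, Equiv.prodComm_apply, Prod.fst_swap, Prod.snd_swap]
    constructor
    · rintro ⟨h1, h2, h3⟩; exact ⟨h2, h1, h3.symm⟩
    · rintro ⟨h1, h2, h3⟩; exact ⟨h2, h1, h3.symm⟩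
  rw [hswap] at final
  unfold pairSum
  linarith [final]


end
end

section
/- m_1(ℝ²) ≤ 2/7, where the bound comes from the Moser spindle, a 7-vertex unit-distance graph in the plane with independence number 2. -/
open MeasureTheory Filter Metric Set Pointwise
open scoped RealInnerProductSpace
open scoped ENNReal

noncomputable section

-- ## auxiliary: cube facts
lemma cube_eq (r : ℝ) : cube 2 0 r =
    (MeasurableEquiv.toLp 2 (Fin 2 → ℝ)).symm ⁻¹' (Set.univ.pi fun _ => Icc (-r) r) := by
  ext x
  simp only [cube, mem_setOf_eq, mem_preimage, Set.mem_pi, mem_univ, forall_true_left,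
    mem_Icc]
  constructor
  · intro h i
    have := h i
    simp only [PiLp.zero_apply, sub_zero] at this
    have := abs_le.1 this
    exact ⟨this.1, this.2⟩
  · intro h i
    simp only [PiLp.zero_apply, sub_zero]
    exact abs_le.2 ⟨(h i).1, (h i).2⟩

lemma cube_measurable_s14 (r : ℝ) : MeasurableSet (cube 2 0 r) := by
  rw [cube_eq]
  exact (MeasurableEquiv.measurable _) (MeasurableSet.univ_pi fun _ => measurableSet_Icc)

lemma cube_volume {r : ℝ} (hr : 0 ≤ r) :
    volume (cube 2 0 r) = ENNReal.ofReal ((2*r)^2) := by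
  rw [cube_eq, (EuclideanSpace.volume_preserving_symm_measurableEquiv_toLp (Fin 2)).measure_preimage
    ((MeasurableSet.univ_pi fun _ => measurableSet_Icc).nullMeasurableSet), volume_pi_pi]
  simp only [Real.volume_Icc]
  rw [Finset.prod_const, Finset.card_univ, Fintype.card_fin]
  rw [← ENNReal.ofReal_pow (by linarith)]
  ring_nf

-- ## spindle geometry
local notation "s3" => Real.sqrt 3
local notation "s11" => Real.sqrt 11

def pt (a b : ℝ) : EuclideanSpace ℝ (Fin 2) := !₂[a, b]

lemma dist_pt (a b c d : ℝ) : dist (pt a b) (pt c d) = Real.sqrt ((a-c)^2 + (b-d)^2) := by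
  rw [EuclideanSpace.dist_eq, Fin.sum_univ_two]
  simp [pt, Real.dist_eq, sq_abs]

lemma pt_inj {a b c d : ℝ} (h : pt a b = pt c d) : a = c ∧ b = d :=
  ⟨congrArg (fun f => f 0) h, by simpa [pt] using congrArg (fun f => f 1) h⟩

def spin : Fin 7 → EuclideanSpace ℝ (Fin 2) :=
  ![pt 0 0, pt (s3/2) (1/2), pt (s3/2) (-(1/2)), pt s3 0,
    pt (5*s3/12 - s11/12) (s3*s11/12 + 5/12),
    pt (5*s3/12 + s11/12) (s3*s11/12 - 5/12),
    pt (5*s3/6) (s3*s11/6)]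

lemma spin0 : spin 0 = pt 0 0 := rfl
lemma spin1 : spin 1 = pt (s3/2) (1/2) := rfl
lemma spin2 : spin 2 = pt (s3/2) (-(1/2)) := rfl
lemma spin3 : spin 3 = pt s3 0 := rfl
lemma spin4 : spin 4 = pt (5*s3/12 - s11/12) (s3*s11/12 + 5/12) := rfl
lemma spin5 : spin 5 = pt (5*s3/12 + s11/12) (s3*s11/12 - 5/12) := rfl
lemma spin6 : spin 6 = pt (5*s3/6) (s3*s11/6) := rfl

def adjE (i j : Fin 7) : Prop :=
  ((i.val, j.val) ∈ [(0,1),(0,2),(1,2),(1,3),(2,3),(0,4),(0,5),(4,5),(4,6),(5,6),(3,6)]) ∨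
  ((j.val, i.val) ∈ [(0,1),(0,2),(1,2),(1,3),(2,3),(0,4),(0,5),(4,5),(4,6),(5,6),(3,6)])

instance : DecidableRel adjE := fun i j => by unfold adjE; infer_instance

lemma triple_lemma : ∀ i j k : Fin 7, i ≠ j → i ≠ k → j ≠ k →
    adjE i j ∨ adjE i k ∨ adjE j k := by decide

lemma sqrt3_lt : Real.sqrt 3 < 1.8 := by
  rw [show (1.8:ℝ) = Real.sqrt (1.8^2) by rw [Real.sqrt_sq]; norm_num]
  exact Real.sqrt_lt_sqrt (by norm_num) (by norm_num)

lemma lt_sqrt3 : (1.7:ℝ) < Real.sqrt 3 := by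
  rw [show (1.7:ℝ) = Real.sqrt (1.7^2) by rw [Real.sqrt_sq]; norm_num]
  exact Real.sqrt_lt_sqrt (by positivity) (by norm_num)

lemma sqrt11_lt : Real.sqrt 11 < 3.4 := by
  rw [show (3.4:ℝ) = Real.sqrt (3.4^2) by rw [Real.sqrt_sq]; norm_num]
  exact Real.sqrt_lt_sqrt (by norm_num) (by norm_num)

lemma lt_sqrt11 : (3.3:ℝ) < Real.sqrt 11 := by
  rw [show (3.3:ℝ) = Real.sqrt (3.3^2) by rw [Real.sqrt_sq]; norm_num]
  exact Real.sqrt_lt_sqrt (by positivity) (by norm_num)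

set_option maxHeartbeats 2000000 in
lemma edge_dist : ∀ i j, adjE i j → dist (spin i) (spin j) = 1 := by
  have h3 : Real.sqrt 3 ^ 2 = 3 := Real.sq_sqrt (by norm_num)
  have h11 : Real.sqrt 11 ^ 2 = 11 := Real.sq_sqrt (by norm_num)
  intro i j hij
  fin_cases i <;> fin_cases j <;>
    first
      | exact absurd hij (by decide)
      | (simp only [Fin.reduceFinMk, spin0, spin1, spin2, spin3, spin4, spin5, spin6]
         rw [dist_pt, Real.sqrt_eq_one]
         nlinarith [h3, h11])

set_option maxHeartbeats 2000000 in
lemma spin_inj : Function.Injective spin := by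
  have h3a := lt_sqrt3; have h3b := sqrt3_lt
  have h11a := lt_sqrt11; have h11b := sqrt11_lt
  intro i j hij
  by_contra hne
  revert hij
  fin_cases i <;> fin_cases j <;>
    first
      | exact absurd rfl hne
      | (intro hij
         simp only [Fin.reduceFinMk, spin0, spin1, spin2, spin3, spin4, spin5, spin6] at hij
         obtain ⟨e0, e1⟩ := pt_inj hij
         nlinarith [h3a, h3b, h11a, h11b, e0, e1])

set_option maxHeartbeats 1000000 in
lemma spin_bound : ∀ (i : Fin 7) (j : Fin 2), |spin i j| ≤ 2 := by
  have h3a := lt_sqrt3; have h3b := sqrt3_lt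
  have h11a := lt_sqrt11; have h11b := sqrt11_lt
  intro i j
  fin_cases i <;>
    (simp only [Fin.reduceFinMk, spin0, spin1, spin2, spin3, spin4, spin5, spin6]
     fin_cases j <;>
       (simp only [Fin.reduceFinMk, pt, PiLp.toLp_apply, Matrix.cons_val_zero, Matrix.cons_val_one, Matrix.head_cons]
        rw [abs_le]
        constructor <;> nlinarith [h3a, h3b, h11a, h11b]))

-- ## the counting estimate
lemma key_estimate {A : Set (EuclideanSpace ℝ (Fin 2))} (hA : MeasurableSet A)
    (hAv : Avoids1 A) {r : ℝ} (hr : 0 ≤ r) :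
    7 * volume (A ∩ cube 2 0 r) ≤ 2 * volume (cube 2 0 (r + 2)) := by
  classical
  set K := cube 2 0 (r + 2) with hK
  set T : Fin 7 → Set (EuclideanSpace ℝ (Fin 2)) :=
    fun i => ((fun x => x + spin i) ⁻¹' A) ∩ K with hT
  have hTmeas : ∀ i, MeasurableSet (T i) := fun i =>
    ((measurable_add_const (spin i)) hA).inter (cube_measurable_s14 _)
  -- each translate of A ∩ cube r embeds in T i
  have h1 : ∀ i, volume (A ∩ cube 2 0 r) ≤ volume (T i) := by
    intro i
    have hsub : A ∩ cube 2 0 r ⊆ (fun x => x + (-(spin i))) ⁻¹' (T i) := by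
      rintro x ⟨hxA, hxc⟩
      refine ⟨?_, ?_⟩
      · show x + -spin i + spin i ∈ A
        simpa using hxA
      · intro j
        have h1 := hxc j
        have h2 := spin_bound i j
        simp only [PiLp.zero_apply, sub_zero] at h1 ⊢
        have he : (x + -spin i) j = x j - spin i j := rfl
        rw [he]
        calc |x j - spin i j| ≤ |x j| + |spin i j| := abs_sub (x j) (spin i j)
        _ ≤ r + 2 := add_le_add h1 h2
    calc volume (A ∩ cube 2 0 r) ≤ volume ((fun x => x + (-(spin i))) ⁻¹' (T i)) :=
          measure_mono hsub
    _ = volume (T i) := measure_preimage_add_right volume _ _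
  -- multiplicity bound
  have hmult : ∀ x, ∑ i : Fin 7, (T i).indicator (fun _ => (1:ℝ≥0∞)) x ≤
      K.indicator (fun _ => (2:ℝ≥0∞)) x := by
    intro x
    by_cases hxK : x ∈ K
    · rw [Set.indicator_of_mem hxK]
      have hcard : (Finset.univ.filter (fun i : Fin 7 => x ∈ T i)).card ≤ 2 := by
        by_contra hc
        push_neg at hc
        obtain ⟨i, j, k, hi, hj, hk, hij, hik, hjk⟩ := Finset.two_lt_card_iff.1 hc
        have hiA : x + spin i ∈ A := ((Finset.mem_filter.1 hi).2).1
        have hjA : x + spin j ∈ A := ((Finset.mem_filter.1 hj).2).1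
        have hkA : x + spin k ∈ A := ((Finset.mem_filter.1 hk).2).1
        rcases triple_lemma i j k hij hik hjk with h | h | h
        · exact hAv _ hiA _ hjA (by rw [dist_add_left]; exact edge_dist _ _ h)
        · exact hAv _ hiA _ hkA (by rw [dist_add_left]; exact edge_dist _ _ h)
        · exact hAv _ hjA _ hkA (by rw [dist_add_left]; exact edge_dist _ _ h)
      calc ∑ i : Fin 7, (T i).indicator (fun _ => (1:ℝ≥0∞)) x
          = ∑ i : Fin 7, if x ∈ T i then (1:ℝ≥0∞) else 0 := by
            simp [Set.indicator_apply]
      _ = ((Finset.univ.filter (fun i : Fin 7 => x ∈ T i)).card : ℝ≥0∞) :=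
            Finset.sum_boole _ _
      _ ≤ 2 := by exact_mod_cast hcard
    · rw [Set.indicator_of_notMem hxK]
      have : ∀ i : Fin 7, (T i).indicator (fun _ => (1:ℝ≥0∞)) x = 0 := by
        intro i
        apply Set.indicator_of_notMem
        exact fun h => hxK h.2
      simp [this]
  -- integrate
  have h2 : ∑ i : Fin 7, volume (T i) ≤ 2 * volume K := by
    have heq : ∀ i : Fin 7, volume (T i) =
        ∫⁻ x, (T i).indicator (fun _ => (1:ℝ≥0∞)) x := by
      intro i
      rw [lintegral_indicator_const (hTmeas i), one_mul]
    calc ∑ i : Fin 7, volume (T i)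
        = ∑ i : Fin 7, ∫⁻ x, (T i).indicator (fun _ => (1:ℝ≥0∞)) x := by
          exact Finset.sum_congr rfl fun i _ => heq i
    _ = ∫⁻ x, ∑ i : Fin 7, (T i).indicator (fun _ => (1:ℝ≥0∞)) x := by
          rw [lintegral_finset_sum]
          exact fun i _ => measurable_const.indicator (hTmeas i)
    _ ≤ ∫⁻ x, K.indicator (fun _ => (2:ℝ≥0∞)) x := lintegral_mono hmult
    _ = 2 * volume K := lintegral_indicator_const (cube_measurable_s14 _) _
  calc (7:ℝ≥0∞) * volume (A ∩ cube 2 0 r)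
      = ∑ _i : Fin 7, volume (A ∩ cube 2 0 r) := by
        rw [Finset.sum_const, Finset.card_univ, Fintype.card_fin]
        simp [nsmul_eq_mul]
  _ ≤ ∑ i : Fin 7, volume (T i) := Finset.sum_le_sum fun i _ => h1 i
  _ ≤ 2 * volume K := h2

-- ## density bound
lemma density_le {A : Set (EuclideanSpace ℝ (Fin 2))} (hA : MeasurableSet A)
    (hAv : Avoids1 A) : upperDensity A ≤ 2 / 7 := by
  set f : ℝ → ℝ := fun r => (volume (A ∩ cube 2 0 r)).toReal / (2 * r) ^ 2 with hf
  set g : ℝ → ℝ := fun r => ((2/7) * (2*(r+2))^2) / (2*r)^2 with hg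
  have hfg : ∀ᶠ r in atTop, f r ≤ g r := by
    filter_upwards [eventually_ge_atTop (1:ℝ)] with r hr1
    have hr : (0:ℝ) ≤ r := by linarith
    have hkey := key_estimate hA hAv hr
    have hvol : volume (cube 2 0 (r+2)) = ENNReal.ofReal ((2*(r+2))^2) :=
      cube_volume (by linarith)
    rw [hvol] at hkey
    have hfin : volume (A ∩ cube 2 0 r) ≠ ⊤ := by
      have hle : volume (A ∩ cube 2 0 r) ≤ volume (cube 2 0 r) :=
        measure_mono inter_subset_right
      have : volume (cube 2 0 r) < ⊤ := by
        rw [cube_volume hr]; exact ENNReal.ofReal_lt_top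
      exact ne_top_of_le_ne_top this.ne hle
    have hreal : 7 * (volume (A ∩ cube 2 0 r)).toReal ≤ 2 * (2*(r+2))^2 := by
      have := ENNReal.toReal_mono (by finiteness) hkey
      rw [ENNReal.toReal_mul, ENNReal.toReal_mul, ENNReal.toReal_ofReal
        (by positivity)] at this
      simpa using this
    have hnum : (volume (A ∩ cube 2 0 r)).toReal ≤ (2/7) * (2*(r+2))^2 := by
      linarith
    have hpos : (0:ℝ) < (2*r)^2 := by positivity
    exact div_le_div_of_nonneg_right hnum hpos.le
  have hgt : Tendsto g atTop (nhds (2/7)) := by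
    have hEq : ∀ᶠ r in atTop, g r = (2/7) * (1 + 2/r)^2 := by
      filter_upwards [eventually_gt_atTop (0:ℝ)] with r hr
      have hrne : r ≠ 0 := ne_of_gt hr
      simp only [hg]
      field_simp [hg]
    have h0 : Tendsto (fun r : ℝ => (2:ℝ)/r) atTop (nhds 0) :=
      tendsto_const_nhds.div_atTop tendsto_id
    have h1 : Tendsto (fun r : ℝ => (2/7) * (1 + 2/r)^2) atTop (nhds ((2/7) * (1+0)^2)) := by
      exact tendsto_const_nhds.mul ((tendsto_const_nhds.add h0).pow 2)
    rw [show ((2:ℝ)/7) * (1+0)^2 = 2/7 by norm_num] at h1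
    exact Tendsto.congr' (hEq.mono fun r h => h.symm) h1
  have hbnd : IsBoundedUnder (· ≤ ·) atTop g := hgt.isBoundedUnder_le
  have hcob : IsCoboundedUnder (· ≤ ·) atTop f :=
    isCoboundedUnder_le_of_eventually_le atTop (x := 0)
      (Eventually.of_forall fun r => by positivity)
  calc upperDensity A = limsup f atTop := by
        simp only [upperDensity, hf]
  _ ≤ limsup g atTop := limsup_le_limsup hfg hcob hbnd
  _ = 2/7 := hgt.limsup_eq


theorem m1_plane_le_two_sevenths :
    m1 2 ≤ 2 / 7 ∧
    ∃ V : Finset (EuclideanSpace ℝ (Fin 2)), V.card = 7 ∧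
      indepNum (fun x y : EuclideanSpace ℝ (Fin 2) => dist x y = 1) ↑V = 2 := by
  classical
  constructor
  · apply Real.sSup_le _ (by norm_num)
    rintro d ⟨A, hA, hAv, rfl⟩
    exact density_le hA hAv
  · refine ⟨Finset.image spin Finset.univ, ?_, ?_⟩
    · rw [Finset.card_image_of_injective _ spin_inj, Finset.card_univ, Fintype.card_fin]
    · have hbound : ∀ k ∈ {k | ∃ s : Finset (EuclideanSpace ℝ (Fin 2)),
          ↑s ⊆ (↑(Finset.image spin Finset.univ) : Set (EuclideanSpace ℝ (Fin 2))) ∧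
          (∀ x ∈ s, ∀ y ∈ s, x ≠ y → ¬ dist x y = 1) ∧ s.card = k}, k ≤ 2 := by
        rintro k ⟨s, hsub, hind, rfl⟩
        by_contra hc
        push_neg at hc
        obtain ⟨a, b, c, ha, hb, hcm, hab, hac, hbc⟩ := Finset.two_lt_card_iff.1 hc
        obtain ⟨i, _, rfl⟩ := Finset.mem_image.1 (by exact_mod_cast hsub ha)
        obtain ⟨j, _, rfl⟩ := Finset.mem_image.1 (by exact_mod_cast hsub hb)
        obtain ⟨l, _, rfl⟩ := Finset.mem_image.1 (by exact_mod_cast hsub hcm)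
        have hij : i ≠ j := fun h => hab (by rw [h])
        have hil : i ≠ l := fun h => hac (by rw [h])
        have hjl : j ≠ l := fun h => hbc (by rw [h])
        rcases triple_lemma i j l hij hil hjl with h | h | h
        · exact hind _ ha _ hb hab (edge_dist _ _ h)
        · exact hind _ ha _ hcm hac (edge_dist _ _ h)
        · exact hind _ hb _ hcm hbc (edge_dist _ _ h)
      have hmem : 2 ∈ {k | ∃ s : Finset (EuclideanSpace ℝ (Fin 2)),
          ↑s ⊆ (↑(Finset.image spin Finset.univ) : Set (EuclideanSpace ℝ (Fin 2))) ∧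
          (∀ x ∈ s, ∀ y ∈ s, x ≠ y → ¬ dist x y = 1) ∧ s.card = k} := by
        have hne : spin 0 ≠ spin 3 := fun h => by
          have : (0 : Fin 7) = 3 := spin_inj h
          exact absurd this (by decide)
        have hd : dist (spin 0) (spin 3) ≠ 1 := by
          have h3 : Real.sqrt 3 ^ 2 = 3 := Real.sq_sqrt (by norm_num)
          intro h
          rw [spin0, spin3, dist_pt, Real.sqrt_eq_one] at h
          nlinarith [h3, h]
        refine ⟨{spin 0, spin 3}, ?_, ?_, ?_⟩
        · intro x hx
          simp only [Finset.coe_insert, Finset.coe_singleton, mem_insert_iff,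
            mem_singleton_iff] at hx
          rcases hx with rfl | rfl <;>
            · simp only [Finset.coe_image, Finset.coe_univ, Set.image_univ]
              exact ⟨_, rfl⟩
        · intro x hx y hy hxy
          simp only [Finset.mem_insert, Finset.mem_singleton] at hx hy
          rcases hx with rfl | rfl <;> rcases hy with rfl | rfl
          · exact absurd rfl hxy
          · exact hd
          · rw [dist_comm]; exact hd
          · exact absurd rfl hxy
        · rw [Finset.card_insert_of_notMem (by simpa using hne), Finset.card_singleton]
      exact le_antisymm (csSup_le ⟨2, hmem⟩ hbound) (le_csSup ⟨2, hbound⟩ hmem)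

end
end

section
/- For every n ≥ 2 there exists a (necessarily non-measurable) 1-avoiding set A ⊆ ℝ^n of full outer measure, that is, such that the Lebesgue inner measure of its complement is 0; equivalently, λ*(A ∩ S) = λ(S) for every Lebesgue-measurable set S ⊆ ℝ^n of finite measure, where λ* denotes Lebesgue outer measure. -/
open MeasureTheory Filter Metric Set Pointwise
open scoped RealInnerProductSpace

noncomputable section

namespace FOMAaux

open Cardinal

lemma two_roots {H : Type*} [NormedAddCommGroup H] [InnerProductSpace ℝ H]
    (e v : H) (he : ‖e‖ = 1) : ∃ a b : ℝ, {t : ℝ | ‖v + t • e‖ = 1} ⊆ {a, b} := by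
  set c := ⟪v, e⟫ with hc
  set r := 1 - ‖v‖ ^ 2 + c ^ 2 with hr
  refine ⟨Real.sqrt r - c, -Real.sqrt r - c, ?_⟩
  intro t ht
  simp only [Set.mem_setOf_eq] at ht
  have h2 : ‖v + t • e‖ ^ 2 = ‖v‖ ^ 2 + 2 * (t * c) + t ^ 2 := by
    rw [norm_add_sq_real, real_inner_smul_right, norm_smul, he]
    rw [Real.norm_eq_abs]
    ring_nf
    rw [sq_abs]
  have key : (t + c) ^ 2 = r := by
    have : ‖v + t • e‖ ^ 2 = 1 := by rw [ht]; norm_num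
    rw [h2] at this; rw [hr]; nlinarith
  have habs : |t + c| = Real.sqrt r := by
    rw [← key, Real.sqrt_sq_eq_abs]
  rcases abs_eq (Real.sqrt_nonneg r) |>.mp habs with h | h
  · left; linarith
  · right; simp only [Set.mem_singleton_iff]; linarith

/-- The first coordinate unit vector. -/
def e0 (m : ℕ) : EuclideanSpace ℝ (Fin (m+1)) := EuclideanSpace.single 0 1

lemma norm_e0 (m : ℕ) : ‖e0 m‖ = 1 := by
  rw [e0, EuclideanSpace.norm_single]; norm_num

lemma card_line_sphere {m : ℕ} (x₀ c : EuclideanSpace ℝ (Fin (m+1))) :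
    Cardinal.mk {t : ℝ | dist (x₀ + t • e0 m) c = 1} ≤ 2 := by
  obtain ⟨a, b, hab⟩ := two_roots (e0 m) (x₀ - c) (norm_e0 m)
  have hsub : {t : ℝ | dist (x₀ + t • e0 m) c = 1} ⊆ {a, b} := by
    intro t ht
    apply hab
    simp only [Set.mem_setOf_eq] at ht ⊢
    rw [← ht, dist_eq_norm]
    congr 1
    abel
  calc Cardinal.mk {t : ℝ | dist (x₀ + t • e0 m) c = 1} ≤ Cardinal.mk ({a, b} : Set ℝ) :=
        Cardinal.mk_le_mk_of_subset hsub
    _ ≤ 2 := by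
        have := Cardinal.mk_insert_le (α := ℝ) (s := {b}) (a := a)
        simp only [Cardinal.mk_singleton] at this
        calc Cardinal.mk ({a, b} : Set ℝ) ≤ 1 + 1 := this
          _ = 2 := by norm_num

lemma card_of_pos_measure {T : Set ℝ} (hTm : MeasurableSet T) (hT : volume T ≠ 0) :
    Cardinal.continuum ≤ Cardinal.mk T := by
  have hcover : T = ⋃ m : ℕ, T ∩ Icc (-(m:ℝ)) m := by
    ext x
    simp only [mem_iUnion, mem_inter_iff, mem_Icc]
    constructor
    · intro hx
      obtain ⟨m, hm⟩ := exists_nat_ge |x|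
      exact ⟨m, hx, by cases abs_le.mp hm; constructor <;> linarith⟩
    · rintro ⟨m, hx, -⟩; exact hx
  have : ∃ m : ℕ, volume (T ∩ Icc (-(m:ℝ)) m) ≠ 0 := by
    by_contra h
    push_neg at h
    apply hT
    rw [hcover]
    exact measure_iUnion_null h
  obtain ⟨m, hm⟩ := this
  set T' := T ∩ Icc (-(m:ℝ)) m with hT'
  have hT'm : MeasurableSet T' := hTm.inter measurableSet_Icc
  have hT'fin : volume T' ≠ ⊤ :=
    (lt_of_le_of_lt (measure_mono inter_subset_right) measure_Icc_lt_top).ne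
  obtain ⟨K, hKT, hKc, hK⟩ := hT'm.exists_isCompact_lt_add hT'fin (ε := volume T') hm
  have hKpos : volume K ≠ 0 := by
    intro h0
    rw [h0, zero_add] at hK
    exact lt_irrefl _ hK
  have hKunc : ¬ K.Countable := fun h => hKpos (h.measure_zero volume)
  obtain ⟨f, hfK, -, hfinj⟩ := hKc.isClosed.exists_nat_bool_injection_of_not_countable hKunc
  calc Cardinal.continuum ≤ Cardinal.mk (ℕ → Bool) := by
        rw [Cardinal.mk_arrow]; simp [Cardinal.two_power_aleph0]
    _ = Cardinal.mk (range f) := (Cardinal.mk_range_eq f hfinj).symm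
    _ ≤ Cardinal.mk T := Cardinal.mk_le_mk_of_subset (hfK.trans (hKT.trans inter_subset_left))

lemma slice_lemma {m : ℕ} {F : Set (EuclideanSpace ℝ (Fin (m+1)))} (hFm : MeasurableSet F)
    (hF : volume F ≠ 0) :
    ∃ x₀ : EuclideanSpace ℝ (Fin (m+1)),
      MeasurableSet {t : ℝ | x₀ + t • e0 m ∈ F} ∧ volume {t : ℝ | x₀ + t • e0 m ∈ F} ≠ 0 := by
  classical
  set φ := (MeasurableEquiv.toLp 2 (Fin (m+1) → ℝ)).symm with hφ
  set ψ := MeasurableEquiv.piFinSuccAbove (fun _ : Fin (m+1) => ℝ) 0 with hψ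
  set g : (Fin m → ℝ) × ℝ → EuclideanSpace ℝ (Fin (m+1)) :=
    fun p => φ.symm (ψ.symm (p.2, p.1)) with hg
  have hgm : MeasurePreserving g volume volume := by
    have h1 : MeasurePreserving (Prod.swap : (Fin m → ℝ) × ℝ → ℝ × (Fin m → ℝ)) volume volume := by
      rw [Measure.volume_eq_prod, Measure.volume_eq_prod]
      exact Measure.measurePreserving_swap
    have h2 : MeasurePreserving ψ.symm volume volume :=
      (volume_preserving_piFinSuccAbove (fun _ : Fin (m+1) => ℝ) 0).symm
    have h3 : MeasurePreserving φ.symm volume volume :=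
      (EuclideanSpace.volume_preserving_symm_measurableEquiv_toLp (Fin (m+1))).symm
    exact (h3.comp h2).comp h1
  set s : Set ((Fin m → ℝ) × ℝ) := g ⁻¹' F with hs
  have hsm : MeasurableSet s := hgm.measurable hFm
  have hsvol : volume s ≠ 0 := by
    rw [hgm.measure_preimage hFm.nullMeasurableSet]; exact hF
  have key : ¬ ((fun y => volume (Prod.mk y ⁻¹' s)) =ᶠ[ae (volume : Measure (Fin m → ℝ))] 0) := by
    intro h
    apply hsvol
    rw [Measure.volume_eq_prod]
    exact (Measure.measure_prod_null hsm).mpr h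
  have : ∃ y : Fin m → ℝ, volume (Prod.mk y ⁻¹' s) ≠ 0 := by
    by_contra h
    push_neg at h
    exact key (Filter.Eventually.of_forall h)
  obtain ⟨y, hy⟩ := this
  refine ⟨g (y, 0), ?_⟩
  have hline : ∀ t : ℝ, g (y, 0) + t • e0 m = g (y, t) := by
    intro t
    have hcoord : ∀ u : ℝ, g (y, u) = WithLp.toLp 2 (Fin.insertNth 0 u y : Fin (m+1) → ℝ) :=
      fun u => rfl
    rw [hcoord 0, hcoord t]
    apply PiLp.ext
    intro i
    simp only [PiLp.add_apply, PiLp.smul_apply, smul_eq_mul, PiLp.toLp_apply]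
    induction i using Fin.cases with
    | zero =>
        rw [Fin.insertNth_apply_same, Fin.insertNth_apply_same]
        simp [e0, EuclideanSpace.single_apply]
    | succ j =>
        have h1 := Fin.insertNth_apply_succAbove (α := fun _ : Fin (m+1) => ℝ) 0 0 y j
        have h2 := Fin.insertNth_apply_succAbove (α := fun _ : Fin (m+1) => ℝ) 0 t y j
        rw [Fin.succAbove_zero] at h1 h2
        rw [h1, h2]
        simp [e0, EuclideanSpace.single_apply, Fin.succ_ne_zero]
  have hset : {t : ℝ | g (y, 0) + t • e0 m ∈ F} = Prod.mk y ⁻¹' s := by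
    ext t
    simp only [Set.mem_setOf_eq, Set.mem_preimage, hs, hline t]
  rw [hset]
  constructor
  · exact hsm.preimage measurable_prodMk_left
  · exact hy

lemma exists_point {m : ℕ} {F : Set (EuclideanSpace ℝ (Fin (m+1)))} (hFm : MeasurableSet F)
    (hF : volume F ≠ 0) (D : Set (EuclideanSpace ℝ (Fin (m+1))))
    (hD : Cardinal.mk D < Cardinal.continuum) :
    ∃ x ∈ F, ∀ y ∈ D, dist x y ≠ 1 := by
  obtain ⟨x₀, hTm, hT⟩ := slice_lemma hFm hF
  set Bad : Set ℝ := ⋃ c ∈ D, {t : ℝ | dist (x₀ + t • e0 m) c = 1} with hBad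
  have hBadcard : Cardinal.mk Bad < Cardinal.continuum := by
    calc Cardinal.mk Bad
        ≤ Cardinal.mk D * ⨆ c : D, Cardinal.mk {t : ℝ | dist (x₀ + t • e0 m) (c : _) = 1} :=
          Cardinal.mk_biUnion_le _ D
      _ ≤ Cardinal.mk D * 2 := by
          apply mul_le_mul_right
          exact ciSup_le' fun c => card_line_sphere x₀ (c : _)
      _ < Cardinal.continuum :=
          Cardinal.mul_lt_of_lt Cardinal.aleph0_le_continuum hD
            (lt_of_lt_of_le (Cardinal.nat_lt_aleph0 2) Cardinal.aleph0_le_continuum)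
  have : ∃ t : ℝ, (x₀ + t • e0 m ∈ F) ∧ t ∉ Bad := by
    by_contra h
    push_neg at h
    have hsub : {t : ℝ | x₀ + t • e0 m ∈ F} ⊆ Bad := fun t ht => h t ht
    exact absurd (le_trans (card_of_pos_measure hTm hT) (Cardinal.mk_le_mk_of_subset hsub))
      (not_le.mpr hBadcard)
  obtain ⟨t, htF, htB⟩ := this
  refine ⟨x₀ + t • e0 m, htF, fun y hy hdist => ?_⟩
  exact htB (Set.mem_biUnion hy hdist)

/-- The index type: an ordinal of cardinality continuum. -/
abbrev I : Type := Cardinal.continuum.ord.ToType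

noncomputable def pick {m : ℕ} (e : I → Set (EuclideanSpace ℝ (Fin (m+1)))) :
    I → EuclideanSpace ℝ (Fin (m+1)) :=
  IsWellFounded.fix (α := I) (· < ·) fun i ih =>
    Classical.epsilon fun x => x ∈ e i ∧ ∀ j, (h : j < i) → dist x (ih j h) ≠ 1

lemma pick_eq {m : ℕ} (e : I → Set (EuclideanSpace ℝ (Fin (m+1)))) (i : I) :
    pick e i = Classical.epsilon
      (fun x => x ∈ e i ∧ ∀ j, j < i → dist x (pick e j) ≠ 1) :=
  IsWellFounded.fix_eq _ _ i

lemma pick_spec {m : ℕ} (e : I → Set (EuclideanSpace ℝ (Fin (m+1))))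
    (he : ∀ i, MeasurableSet (e i) ∧ volume (e i) ≠ 0) (i : I) :
    pick e i ∈ e i ∧ ∀ j, j < i → dist (pick e i) (pick e j) ≠ 1 := by
  rw [pick_eq]
  apply Classical.epsilon_spec (p := fun x => x ∈ e i ∧ ∀ j, j < i → dist x (pick e j) ≠ 1)
  have hD : Cardinal.mk (pick e '' (Set.Iio i)) < Cardinal.continuum :=
    lt_of_le_of_lt Cardinal.mk_image_le (Cardinal.mk_Iio_toType_ord_lt i)
  obtain ⟨x, hxF, hx⟩ := exists_point (he i).1 (he i).2 _ hD
  exact ⟨x, hxF, fun j hj => hx _ (Set.mem_image_of_mem _ hj)⟩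

lemma closed_surj (X : Type*) [TopologicalSpace X] [SecondCountableTopology X] [Nonempty X] :
    ∃ cl : Set ℕ → Set X, (∀ σ, IsClosed (cl σ)) ∧ ∀ F : Set X, IsClosed F → ∃ σ, cl σ = F := by
  obtain ⟨b, hbc, hbne, hb⟩ := TopologicalSpace.exists_countable_basis X
  have hbnonempty : b.Nonempty := by
    rcases isEmpty_or_nonempty X with h | h
    · exact absurd ‹Nonempty X› (not_nonempty_iff.mpr h)
    · by_contra hemp
      rw [Set.not_nonempty_iff_eq_empty] at hemp
      have := hb.sUnion_eq
      rw [hemp] at this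
      simp only [Set.sUnion_empty] at this
      exact (Set.Nonempty.ne_empty (Set.nonempty_iff_univ_nonempty.mp ‹_›)) this.symm
  obtain ⟨f, hf⟩ := hbc.exists_eq_range hbnonempty
  refine ⟨fun σ => (⋃ k ∈ σ, f k)ᶜ, fun σ => (isOpen_biUnion fun k _ => ?_).isClosed_compl, ?_⟩
  · apply hb.isOpen
    rw [hf]; exact Set.mem_range_self k
  · intro F hF
    refine ⟨{k | f k ⊆ Fᶜ}, ?_⟩
    have : (⋃ k ∈ {k | f k ⊆ Fᶜ}, f k) = Fᶜ := by
      apply subset_antisymm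
      · exact Set.iUnion₂_subset fun k hk => hk
      · intro x hx
        obtain ⟨t, htb, hxt, hts⟩ := hb.isOpen_iff.mp hF.isOpen_compl x hx
        rw [hf] at htb
        obtain ⟨k, rfl⟩ := htb
        exact Set.mem_biUnion hts hxt
    simp only []
    rw [this, compl_compl]

end FOMAaux

set_option synthInstance.maxHeartbeats 1000000
set_option maxHeartbeats 1000000

theorem exists_full_outer_measure_avoiding (n : ℕ) (hn : 2 ≤ n) :
    ∃ A : Set (EuclideanSpace ℝ (Fin n)),
      Avoids1 A ∧ ¬ MeasurableSet A ∧
      ∀ S : Set (EuclideanSpace ℝ (Fin n)), MeasurableSet S → volume S < ⊤ →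
        volume (A ∩ S) = volume S := by
  classical
  obtain ⟨m, rfl⟩ : ∃ m, n = m + 1 := ⟨n - 1, by omega⟩
  obtain ⟨cl, hclosed, hclsurj⟩ := FOMAaux.closed_surj (EuclideanSpace ℝ (Fin (m+1)))
  have hcard : Cardinal.mk FOMAaux.I = Cardinal.mk (Set ℕ) := by
    rw [Cardinal.mk_ord_toType, Cardinal.mk_set, Cardinal.mk_nat, Cardinal.two_power_aleph0]
  obtain ⟨g⟩ := Cardinal.eq.mp hcard
  set e : FOMAaux.I → Set (EuclideanSpace ℝ (Fin (m+1))) := fun i =>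
    if volume (cl (g i)) ≠ 0 then cl (g i) else Metric.closedBall 0 1 with he
  have heprop : ∀ i, MeasurableSet (e i) ∧ volume (e i) ≠ 0 := by
    intro i
    rw [he]
    simp only []
    split_ifs with h
    · exact ⟨(hclosed _).measurableSet, h⟩
    · exact ⟨measurableSet_closedBall, (measure_closedBall_pos volume _ one_pos).ne'⟩
  set A := Set.range (FOMAaux.pick e) with hA
  have hspec := FOMAaux.pick_spec e heprop
  have hmeets : ∀ F, IsClosed F → volume F ≠ 0 → (A ∩ F).Nonempty := by
    intro F hF hFvol
    obtain ⟨σ, hσ⟩ := hclsurj F hF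
    have heF : e (g.symm σ) = F := by
      rw [he]
      simp only [Equiv.apply_symm_apply, hσ]
      rw [if_pos hFvol]
    exact ⟨FOMAaux.pick e (g.symm σ), Set.mem_range_self _, heF ▸ (hspec (g.symm σ)).1⟩
  have hAvoid : Avoids1 A := by
    rintro x ⟨i, rfl⟩ y ⟨j, rfl⟩ h1
    rcases lt_trichotomy i j with h | h | h
    · exact (hspec j).2 i h (by rwa [dist_comm] at h1)
    · subst h
      rw [dist_self] at h1
      norm_num at h1
    · exact (hspec i).2 j h h1
  have hfull : ∀ S : Set (EuclideanSpace ℝ (Fin (m+1))), MeasurableSet S → volume S < ⊤ →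
      volume (A ∩ S) = volume S := by
    intro S hS hSfin
    refine le_antisymm (measure_mono inter_subset_right) (not_lt.mp fun hlt => ?_)
    set H := toMeasurable volume (A ∩ S) with hH
    have hHvol : volume H = volume (A ∩ S) := measure_toMeasurable _
    have hHm : MeasurableSet H := measurableSet_toMeasurable _ _
    have hdiff : volume (S \ H) ≠ 0 := by
      intro h0
      have hle : volume S ≤ volume (A ∩ S) := by
        have := measure_inter_add_diff (μ := volume) S hHm
        rw [h0, add_zero] at this
        calc volume S = volume (S ∩ H) := this.symm
          _ ≤ volume H := measure_mono inter_subset_right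
          _ = volume (A ∩ S) := hHvol
      exact absurd hle (not_le.mpr hlt)
    have hdifffin : volume (S \ H) ≠ ⊤ := ((measure_mono diff_subset).trans_lt hSfin).ne
    obtain ⟨K, hKsub, hKcomp, hK⟩ := (hS.diff hHm).exists_isCompact_lt_add hdifffin hdiff
    have hKvol : volume K ≠ 0 := fun h0 => by rw [h0, zero_add] at hK; exact lt_irrefl _ hK
    obtain ⟨a, haA, haK⟩ := hmeets K hKcomp.isClosed hKvol
    exact (hKsub haK).2 (subset_toMeasurable volume (A ∩ S) ⟨haA, (hKsub haK).1⟩)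
  refine ⟨A, hAvoid, ?_, hfull⟩
  intro hAm
  set u := FOMAaux.e0 m with hu'
  have hu : ‖u‖ = 1 := FOMAaux.norm_e0 m
  set S := Metric.closedBall (0 : EuclideanSpace ℝ (Fin (m+1))) 2 with hSdef
  have hSfin : volume S ≠ ⊤ := measure_closedBall_lt_top.ne
  have hN : volume (S \ A) = 0 := by
    have h1 : volume (S ∩ A) + volume (S \ A) = volume S := measure_inter_add_diff S hAm
    have h2 : volume (S ∩ A) = volume S := by
      rw [inter_comm]
      exact hfull S measurableSet_closedBall measure_closedBall_lt_top
    rw [h2] at h1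
    have := (ENNReal.add_right_inj hSfin).mp (h1.trans (add_zero (volume S)).symm)
    exact this
  have hN2 : volume ((fun x => u + x) ⁻¹' (S \ A)) = 0 := by
    rw [measure_preimage_add]; exact hN
  have hball : volume (Metric.ball (0 : EuclideanSpace ℝ (Fin (m+1))) (1/2)) ≠ 0 :=
    (measure_ball_pos volume _ (by norm_num)).ne'
  have hex : ∃ x ∈ Metric.ball (0 : EuclideanSpace ℝ (Fin (m+1))) (1/2),
      x ∉ (S \ A) ∪ ((fun x => u + x) ⁻¹' (S \ A)) := by
    by_contra h
    push_neg at h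
    exact hball (measure_mono_null (fun x hx => h x hx) (measure_union_null hN hN2))
  obtain ⟨x, hxball, hxgood⟩ := hex
  have hxnorm : ‖x‖ < 1/2 := by rwa [Metric.mem_ball, dist_zero_right] at hxball
  have hxS : x ∈ S := by
    rw [hSdef, Metric.mem_closedBall, dist_zero_right]
    linarith
  have huxS : u + x ∈ S := by
    rw [hSdef, Metric.mem_closedBall, dist_zero_right]
    calc ‖u + x‖ ≤ ‖u‖ + ‖x‖ := norm_add_le u x
      _ ≤ 2 := by rw [hu]; linarith
  have hxA : x ∈ A := by
    by_contra hxA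
    exact hxgood (Or.inl ⟨hxS, hxA⟩)
  have huxA : u + x ∈ A := by
    by_contra huxA
    exact hxgood (Or.inr ⟨huxS, huxA⟩)
  have hdist : dist x (u + x) = 1 := by
    rw [dist_eq_norm]
    have : x - (u + x) = -u := by abel
    rw [this, norm_neg, hu]
  exact hAvoid x hxA (u + x) huxA hdist


end
end
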